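/- arXiv:2510.00230 — 3 statements merged into one kernel-verified Lean document; each statement's English description precedes it below -/
import Mathlib

section
/- Let δ ∈ (0, 1/4], a ∈ (0, π), λ ≥ 1, M ≥ 1. Let g be continuous on the closed unit disk, analytic on its interior, with |g(δ)| ≥ 1 and |g(z)| ≤ λM/γ whenever |z| ≤ 1-γ for γ ∈ (0,1]. Let Γ be the circle of radius 1-δ centered at δ and J the closed arc of Γ with midpoint 1 and arc length a. Then max_{z∈J} |g(z)| ≥ (δ/(λM))^{C/a} for some absolute constant C > 0. -/
/-!
Take `n ≥ 2π/a` and `h z = ∏_{ξⁿ = 1} g (δ + ξ (z - δ))`, which is holomorphic on the disc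
`|z - δ| < 1 - δ`, continuous up to its boundary circle `Γ`, and has `|h δ| = |g δ|ⁿ ≥ 1`.
For `z ∈ Γ` the points `δ + ξ (z - δ)` are the points `δ + (1 - δ) ξ u`, `ξⁿ = 1`, for some
`u = e^{iψ}` with `|ψ| ≤ π/n`. The one with `ξ = 1` lies on `J`; every other one satisfies
`1 - |w| ≥ δ (1 - δ) |ξ u - 1|² / 2`, so the growth bound gives
`|g w| ≤ 2λM / (δ (1 - δ) |ξ u - 1|²)`. The product of the `|ξ u - 1|` over `ξ ≠ 1` is
`|1 + ū + ⋯ + ūⁿ⁻¹| = |ūⁿ - 1| / |ū - 1| ≥ 1`, because `|ψ| ≤ |nψ| ≤ π`. Hence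
`|h| ≤ max_J |g| · (2λM / (δ (1 - δ)))ⁿ⁻¹` on `Γ`, and the maximum modulus principle at `δ`
gives `max_J |g| ≥ (δ / (λM))^{2(n - 1)}`.
-/

open Polynomial Finset Complex Metric
open scoped Real

variable {n : ℕ}

section RootsOfUnity

variable {K : Type*} [Field K]

theorem prod_nthRootsFinset_mul_right {M : Type*} [CommMonoid M] (hn : 0 < n) {ζ : K}
    (hζ : ζ ∈ nthRootsFinset n (1 : K)) (f : K → M) :
    ∏ ξ ∈ nthRootsFinset n (1 : K), f (ξ * ζ) = ∏ ξ ∈ nthRootsFinset n (1 : K), f ξ := by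
  rw [mem_nthRootsFinset hn] at hζ
  have hζ0 : ζ ≠ 0 := by rintro rfl; simp [hn.ne'] at hζ
  refine prod_nbij' (· * ζ) (· * ζ⁻¹) ?_ ?_ ?_ ?_ (fun _ _ => rfl) <;>
    intro ξ hξ <;> simp_all [mul_pow]

theorem prod_erase_one_sub_eq_geom_sum [DecidableEq K] {ζ : K} (hn : 0 < n)
    (hζ : IsPrimitiveRoot ζ n) (x : K) :
    ∏ ξ ∈ (nthRootsFinset n (1 : K)).erase 1, (x - ξ) = ∑ i ∈ range n, x ^ i := by
  have hpoly : ∏ ξ ∈ (nthRootsFinset n (1 : K)).erase 1, (X - C ξ) = ∑ i ∈ range n, X ^ i := by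
    refine mul_left_cancel₀ (X_sub_C_ne_zero (1 : K)) ?_
    rw [mul_prod_erase _ (fun ξ => X - C ξ) ((mem_nthRootsFinset hn 1).2 (one_pow n)),
      ← X_pow_sub_one_eq_prod hn hζ, mul_comm, C_1, geom_sum_mul]
  simpa [eval_prod, eval_finsetSum] using congrArg (eval x) hpoly

end RootsOfUnity

theorem sq_norm_exp_mul_I_sub_one (t : ℝ) : ‖exp (t * I) - 1‖ ^ 2 = 2 - 2 * Real.cos t := by
  rw [Complex.sq_norm, exp_mul_I, ← ofReal_cos, ← ofReal_sin, normSq_apply]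
  simp only [sub_re, add_re, ofReal_re, mul_re, I_re, ofReal_im, I_im, one_re, sub_im, add_im,
    mul_im, one_im]
  nlinarith [Real.sin_sq_add_cos_sq t]

theorem norm_exp_mul_I_sub_one_le_norm_pow {ψ : ℝ} (hn : 0 < n) (hψ : |ψ| ≤ π / n) :
    ‖exp (ψ * I) - 1‖ ≤ ‖exp (ψ * I) ^ n - 1‖ := by
  have hle : |ψ| ≤ |n * ψ| := by
    rw [abs_mul, Nat.abs_cast]
    exact le_mul_of_one_le_left (abs_nonneg ψ) (by exact_mod_cast hn)
  have hnψ : |n * ψ| ≤ π := by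
    rwa [abs_mul, Nat.abs_cast, ← le_div_iff₀' (by exact_mod_cast hn)]
  have hcos : Real.cos (n * ψ) ≤ Real.cos ψ := by
    rw [← Real.cos_abs ψ, ← Real.cos_abs (n * ψ)]
    exact Real.cos_le_cos_of_nonneg_of_le_pi (abs_nonneg ψ) hnψ hle
  rw [← exp_nat_mul, ← mul_assoc]
  refine (sq_le_sq₀ (norm_nonneg _) (norm_nonneg _)).1 ?_
  rw [sq_norm_exp_mul_I_sub_one, ← ofReal_natCast, ← ofReal_mul, sq_norm_exp_mul_I_sub_one]
  linarith

theorem one_le_norm_geom_sum_exp {ψ : ℝ} (hn : 0 < n) (hψ : |ψ| ≤ π / n) :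
    1 ≤ ‖∑ i ∈ range n, exp (ψ * I) ^ i‖ := by
  set x := exp (ψ * I)
  by_cases hx : x = 1
  · simp only [hx, one_pow, sum_const, card_range, nsmul_eq_mul, mul_one, norm_natCast]
    exact_mod_cast hn
  have hx' : 0 < ‖x - 1‖ := norm_pos_iff.2 (sub_ne_zero.2 hx)
  have h := norm_exp_mul_I_sub_one_le_norm_pow hn hψ
  rw [← geom_sum_mul, norm_mul] at h
  exact le_of_mul_le_mul_right (by simpa using h) hx'

theorem one_le_prod_norm_exp_sub_nthRoots {ψ : ℝ} (hn : 0 < n) (hψ : |ψ| ≤ π / n) :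
    1 ≤ ∏ ξ ∈ (nthRootsFinset n (1 : ℂ)).erase 1, ‖exp (ψ * I) - ξ‖ := by
  rw [← norm_prod, prod_erase_one_sub_eq_geom_sum hn (isPrimitiveRoot_exp n hn.ne')]
  exact one_le_norm_geom_sum_exp hn hψ

theorem exists_mem_nthRootsFinset_mul_exp_eq (hn : 0 < n) (θ : ℝ) :
    ∃ ξ ∈ nthRootsFinset n (1 : ℂ), ∃ ψ : ℝ, |ψ| ≤ π / n ∧ ξ * exp (θ * I) = exp (ψ * I) := by
  have hn' : (0 : ℝ) < n := by exact_mod_cast hn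
  set k := round (n * θ / (2 * π))
  refine ⟨exp (-(2 * π * k / n) * I), ?_, θ - 2 * π * k / n, ?_, ?_⟩
  · rw [mem_nthRootsFinset hn, ← exp_nat_mul]
    have hnC : (n : ℂ) ≠ 0 := by exact_mod_cast hn.ne'
    convert exp_int_mul_two_pi_mul_I (-k) using 2
    push_cast
    field_simp
  · calc |θ - 2 * π * k / n| = |2 * π / n * (n * θ / (2 * π) - k)| := by
          congr 1
          field_simp
      _ = 2 * π / n * |n * θ / (2 * π) - k| := by rw [abs_mul, abs_of_pos (by positivity)]
      _ ≤ 2 * π / n * (1 / 2) := by gcongr; exact abs_sub_round _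
      _ = π / n := by ring
  · rw [← exp_add]
    push_cast
    ring_nf

theorem norm_ofReal_add_ofReal_mul_le (δ : ℝ) {u : ℂ} (hu : ‖u‖ = 1) :
    ‖(δ : ℂ) + ((1 - δ : ℝ) : ℂ) * u‖ ≤ 1 - δ * (1 - δ) * ‖u - 1‖ ^ 2 / 2 := by
  set w := (δ : ℂ) + ((1 - δ : ℝ) : ℂ) * u
  have hu2 : u.re * u.re + u.im * u.im = 1 := by
    rw [← normSq_apply, ← Complex.sq_norm, hu, one_pow]
  have hsq : ‖w‖ ^ 2 = 1 - δ * (1 - δ) * ‖u - 1‖ ^ 2 := by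
    simp only [w, Complex.sq_norm, normSq_apply, add_re, add_im, mul_re, mul_im, ofReal_re,
      ofReal_im, sub_re, sub_im, one_re, one_im]
    linear_combination (1 - δ) * hu2
  nlinarith [norm_nonneg w, sq_nonneg (‖w‖ - 1), sq_nonneg ‖u - 1‖]

noncomputable def rotationProd (g : ℂ → ℂ) (n : ℕ) (c z : ℂ) : ℂ :=
  ∏ ξ ∈ nthRootsFinset n (1 : ℂ), g (c + ξ * (z - c))

section RotationProd

variable {g : ℂ → ℂ} {c : ℂ}

theorem rotationProd_self (hn : 0 < n) : rotationProd g n c c = g c ^ n := by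
  simp [rotationProd, (isPrimitiveRoot_exp n hn.ne').card_nthRootsFinset]

theorem DiffContOnCl.rotationProd {R : ℝ} (hg : DiffContOnCl ℂ g (ball c R)) :
    DiffContOnCl ℂ (rotationProd g n c) (ball c R) := by
  have hrot : ∀ ξ ∈ nthRootsFinset n (1 : ℂ),
      DiffContOnCl ℂ (fun z => g (c + ξ * (z - c))) (ball c R) := fun ξ hξ => by
    have hn : 0 < n := Nat.pos_of_ne_zero fun h => by simp [h] at hξ
    have hξ1 : ‖ξ‖ = 1 := norm_eq_one_of_pow_eq_one ((mem_nthRootsFinset hn 1).1 hξ) hn.ne'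
    refine hg.comp (Differentiable.diffContOnCl (by fun_prop)) fun z hz => ?_
    simpa [dist_eq, hξ1] using hz
  exact ⟨DifferentiableOn.fun_finsetProd fun ξ hξ => (hrot ξ hξ).1,
    continuousOn_finsetProd _ fun ξ hξ => (hrot ξ hξ).2⟩

end RotationProd

section ArcBound

variable {g : ℂ → ℂ} {δ L G : ℝ}

theorem norm_comp_mul_sq_norm_sub_one_le (hδ0 : 0 < δ) (hδ1 : δ < 1)
    (hbound : ∀ γ : ℝ, 0 < γ → γ ≤ 1 → ∀ z : ℂ, ‖z‖ ≤ 1 - γ → ‖g z‖ ≤ L / γ)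
    {u : ℂ} (hu : ‖u‖ = 1) :
    ‖g ((δ : ℂ) + ((1 - δ : ℝ) : ℂ) * u)‖ * ‖u - 1‖ ^ 2 ≤ 2 * L / (δ * (1 - δ)) := by
  have hδ' : 0 < δ * (1 - δ) := mul_pos hδ0 (sub_pos.2 hδ1)
  rcases eq_or_ne u 1 with rfl | hu1
  · have hL : 0 ≤ L := by simpa using (norm_nonneg _).trans (hbound 1 one_pos le_rfl 0 (by simp))
    simp only [sub_self, norm_zero, ne_eq, OfNat.ofNat_ne_zero, not_false_eq_true, zero_pow,
      mul_zero]
    positivity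
  set γ := δ * (1 - δ) * ‖u - 1‖ ^ 2 / 2
  have hu1' : 0 < ‖u - 1‖ := norm_pos_iff.2 (sub_ne_zero.2 hu1)
  have hγ0 : 0 < γ := by positivity
  have hγ1 : γ ≤ 1 := by
    have h2 : ‖u - 1‖ ≤ 2 := (norm_sub_le u 1).trans (by simp [hu]; norm_num)
    have h4 : δ * (1 - δ) ≤ 1 / 4 := by nlinarith [sq_nonneg (δ - 1 / 2)]
    have : ‖u - 1‖ ^ 2 ≤ 4 := by nlinarith [norm_nonneg (u - 1)]
    simp only [γ]
    nlinarith [sq_nonneg ‖u - 1‖]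
  have hg := hbound γ hγ0 hγ1 _ (norm_ofReal_add_ofReal_mul_le δ hu)
  calc ‖g ((δ : ℂ) + ((1 - δ : ℝ) : ℂ) * u)‖ * ‖u - 1‖ ^ 2 ≤ L / γ * ‖u - 1‖ ^ 2 := by gcongr
    _ = 2 * L / (δ * (1 - δ)) := by
      simp only [γ]
      field_simp

theorem prod_norm_comp_mul_exp_le (hn : 0 < n) (hδ0 : 0 < δ) (hδ1 : δ < 1)
    (hbound : ∀ γ : ℝ, 0 < γ → γ ≤ 1 → ∀ z : ℂ, ‖z‖ ≤ 1 - γ → ‖g z‖ ≤ L / γ)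
    {ψ : ℝ} (hψ : |ψ| ≤ π / n) :
    ∏ ξ ∈ (nthRootsFinset n (1 : ℂ)).erase 1,
        ‖g ((δ : ℂ) + ((1 - δ : ℝ) : ℂ) * (ξ * exp (ψ * I)))‖
      ≤ (2 * L / (δ * (1 - δ))) ^ (n - 1) := by
  set S := (nthRootsFinset n (1 : ℂ)).erase 1
  set x := exp (ψ * I)
  set F : ℂ → ℝ := fun ξ => ‖g ((δ : ℂ) + ((1 - δ : ℝ) : ℂ) * (ξ * x))‖
  have hnorm : ∀ ξ ∈ S, ‖ξ * x‖ = 1 := fun ξ hξ => by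
    rw [norm_mul, norm_exp_ofReal_mul_I, mul_one]
    exact norm_eq_one_of_pow_eq_one ((mem_nthRootsFinset hn 1).1 (mem_of_mem_erase hξ)) hn.ne'
  have hdist : ∀ ξ ∈ S, ‖ξ * x - 1‖ = ‖exp ((-ψ : ℝ) * I) - ξ‖ := fun ξ _ => by
    rw [ofReal_neg, neg_mul, exp_neg, ← one_mul ‖_ - ξ‖, ← norm_exp_ofReal_mul_I ψ, ← norm_mul,
      mul_sub, mul_inv_cancel₀ (exp_ne_zero _), mul_comm, norm_sub_rev]
  have hprod : 1 ≤ ∏ ξ ∈ S, ‖ξ * x - 1‖ := by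
    rw [prod_congr rfl hdist]
    exact one_le_prod_norm_exp_sub_nthRoots hn (by rwa [abs_neg])
  have hcard : S.card = n - 1 := by
    rw [card_erase_of_mem ((mem_nthRootsFinset hn 1).2 (one_pow n)),
      (isPrimitiveRoot_exp n hn.ne').card_nthRootsFinset]
  calc ∏ ξ ∈ S, F ξ ≤ (∏ ξ ∈ S, F ξ) * (∏ ξ ∈ S, ‖ξ * x - 1‖) ^ 2 :=
        le_mul_of_one_le_right (prod_nonneg fun _ _ => norm_nonneg _) (one_le_pow₀ hprod)
    _ = ∏ ξ ∈ S, F ξ * ‖ξ * x - 1‖ ^ 2 := by rw [← prod_pow, prod_mul_distrib]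
    _ ≤ ∏ ξ ∈ S, 2 * L / (δ * (1 - δ)) :=
        prod_le_prod (fun _ _ => by positivity)
          fun ξ hξ => norm_comp_mul_sq_norm_sub_one_le hδ0 hδ1 hbound (hnorm ξ hξ)
    _ = (2 * L / (δ * (1 - δ))) ^ (n - 1) := by rw [prod_const, hcard]

theorem norm_rotationProd_le (hn : 0 < n) (hδ0 : 0 < δ) (hδ1 : δ < 1)
    (hbound : ∀ γ : ℝ, 0 < γ → γ ≤ 1 → ∀ z : ℂ, ‖z‖ ≤ 1 - γ → ‖g z‖ ≤ L / γ)
    (hG : ∀ ψ : ℝ, |ψ| ≤ π / n → ‖g ((δ : ℂ) + ((1 - δ : ℝ) : ℂ) * exp (ψ * I))‖ ≤ G)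
    {z : ℂ} (hz : ‖z - δ‖ = 1 - δ) :
    ‖rotationProd g n δ z‖ ≤ G * (2 * L / (δ * (1 - δ))) ^ (n - 1) := by
  obtain ⟨ζ, hζ, ψ, hψ, hrot⟩ := exists_mem_nthRootsFinset_mul_exp_eq hn (arg (z - δ))
  have hζz : ζ * (z - δ) = ((1 - δ : ℝ) : ℂ) * exp (ψ * I) := by
    conv_lhs => rw [← norm_mul_exp_arg_mul_I (z - δ)]
    rw [hz, ← hrot]
    ring
  have hprod : rotationProd g n δ z = ∏ ξ ∈ nthRootsFinset n (1 : ℂ),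
      g ((δ : ℂ) + ((1 - δ : ℝ) : ℂ) * (ξ * exp (ψ * I))) := by
    rw [rotationProd, ← prod_nthRootsFinset_mul_right hn hζ]
    refine prod_congr rfl fun ξ _ => ?_
    rw [mul_assoc, hζz, mul_left_comm]
  rw [hprod, ← mul_prod_erase _ _ ((mem_nthRootsFinset hn 1).2 (one_pow n)), norm_mul,
    norm_prod, one_mul]
  exact mul_le_mul (hG ψ hψ) (prod_norm_comp_mul_exp_le hn hδ0 hδ1 hbound hψ)
    (prod_nonneg fun _ _ => norm_nonneg _) ((norm_nonneg _).trans (hG ψ hψ))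

theorem one_le_mul_pow_of_forall_arc_le (hn : 0 < n) (hδ0 : 0 < δ) (hδ1 : δ < 1)
    (hg : DiffContOnCl ℂ g (ball 0 1)) (hgδ : 1 ≤ ‖g δ‖)
    (hbound : ∀ γ : ℝ, 0 < γ → γ ≤ 1 → ∀ z : ℂ, ‖z‖ ≤ 1 - γ → ‖g z‖ ≤ L / γ)
    (hG : ∀ ψ : ℝ, |ψ| ≤ π / n → ‖g ((δ : ℂ) + ((1 - δ : ℝ) : ℂ) * exp (ψ * I))‖ ≤ G) :
    1 ≤ G * (2 * L / (δ * (1 - δ))) ^ (n - 1) := by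
  have hR : 0 < 1 - δ := sub_pos.2 hδ1
  have hball : ball (δ : ℂ) (1 - δ) ⊆ ball 0 1 := ball_subset_ball' (by simp [abs_of_pos hδ0])
  calc 1 ≤ ‖g δ‖ ^ n := one_le_pow₀ hgδ
    _ = ‖rotationProd g n δ δ‖ := by rw [rotationProd_self hn, norm_pow]
    _ ≤ G * (2 * L / (δ * (1 - δ))) ^ (n - 1) := by
      refine norm_le_of_forall_mem_frontier_norm_le isBounded_ball
        ((hg.mono hball).rotationProd) (fun z hz => ?_) (subset_closure (mem_ball_self hR))
      rw [frontier_ball _ hR.ne', mem_sphere_iff_norm] at hz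
      exact norm_rotationProd_le hn hδ0 hδ1 hbound hG hz

end ArcBound

theorem rpow_le_of_one_le_mul_pow {δ L G E : ℝ} {N : ℕ} (hδ0 : 0 < δ) (hδ : δ ≤ 1 / 4)
    (hL : 1 ≤ L) (hE : 2 * N ≤ E) (h : 1 ≤ G * (2 * L / (δ * (1 - δ))) ^ N) :
    (δ / L) ^ E ≤ G := by
  have hL0 : 0 < L := one_pos.trans_le hL
  have hr0 : 0 < δ / L := div_pos hδ0 hL0
  have hr1 : δ / L ≤ 1 / 4 := by rw [div_le_iff₀ hL0]; nlinarith
  have hK : 0 < 2 * L / (δ * (1 - δ)) := by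
    have : 0 < 1 - δ := by linarith
    positivity
  have hsq : (δ / L) ^ 2 ≤ (2 * L / (δ * (1 - δ)))⁻¹ := by
    rw [inv_div, div_pow, div_le_div_iff₀ (by positivity) (by positivity)]
    have h2δ : 2 * δ ≤ (1 - δ) * L := by nlinarith
    nlinarith [mul_le_mul_of_nonneg_left h2δ (mul_pos hδ0 hL0).le]
  calc (δ / L) ^ E ≤ (δ / L) ^ ((2 * N : ℕ) : ℝ) :=
        Real.rpow_le_rpow_of_exponent_ge hr0 (by linarith) (by exact_mod_cast hE)
    _ = ((δ / L) ^ 2) ^ N := by rw [Real.rpow_natCast, pow_mul]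
    _ ≤ ((2 * L / (δ * (1 - δ)))⁻¹) ^ N := by gcongr
    _ ≤ G := by rwa [inv_pow, inv_le_iff_one_le_mul₀ (by positivity)]

/-- Arc lower bound for analytic functions (corrected Lemma 4.1 of Borwein–Erdélyi):
on the closed arc `J` of the circle of radius `1 - δ` centered at `δ`, with midpoint `1`
and arc length `a`, the maximum of `|g|` is at least `(δ/(λM))^{C/a}`. -/
theorem stmt13 : ∃ C : ℝ, 0 < C ∧
    ∀ (δ a lam M : ℝ) (g : ℂ → ℂ),
      0 < δ → δ ≤ 1 / 4 → 0 < a → a < Real.pi → 1 ≤ lam → 1 ≤ M →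
      ContinuousOn g (Metric.closedBall (0 : ℂ) 1) →
      DifferentiableOn ℂ g (Metric.ball (0 : ℂ) 1) →
      1 ≤ ‖g (δ : ℂ)‖ →
      (∀ γ : ℝ, 0 < γ → γ ≤ 1 → ∀ z : ℂ, ‖z‖ ≤ 1 - γ →
        ‖g z‖ ≤ lam * M / γ) →
      ∃ z : ℂ, (∃ φ : ℝ, |φ| ≤ a / (2 * (1 - δ)) ∧
          z = (δ : ℂ) + ((1 - δ : ℝ) : ℂ) * Complex.exp (φ * Complex.I)) ∧
        (δ / (lam * M)) ^ (C / a) ≤ ‖g z‖ := by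
  refine ⟨4 * π, by positivity, fun δ a lam M g hδ0 hδ ha0 _ hlam hM hgc hgd hgδ hbound => ?_⟩
  have hδ1 : δ < 1 := by linarith
  set α := a / (2 * (1 - δ))
  set n := ⌈2 * π / a⌉₊
  have hn : 0 < n := Nat.ceil_pos.2 (by positivity)
  have hπn : π / n ≤ α := by
    rw [div_le_div_iff₀ (by exact_mod_cast hn) (by linarith)]
    nlinarith [Nat.le_ceil (2 * π / a), div_mul_cancel₀ (2 * π) ha0.ne']
  have hexp : 2 * ((n - 1 : ℕ) : ℝ) ≤ 4 * π / a := by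
    rw [Nat.cast_pred hn, le_div_iff₀ ha0]
    nlinarith [Nat.ceil_lt_add_one (R := ℝ) (by positivity : 0 ≤ 2 * π / a),
      div_mul_cancel₀ (2 * π) ha0.ne']
  set arc : ℝ → ℂ := fun φ => (δ : ℂ) + ((1 - δ : ℝ) : ℂ) * exp (φ * I)
  have harc : ContinuousOn (fun φ => ‖g (arc φ)‖) (Set.Icc (-α) α) :=
    (hgc.comp_continuous (by fun_prop) fun φ => mem_closedBall_zero_iff.2 <|
      (norm_ofReal_add_ofReal_mul_le δ (norm_exp_ofReal_mul_I φ)).trans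
        (sub_le_self _ (by have := sub_pos.2 hδ1; positivity))).norm.continuousOn
  obtain ⟨φ₀, hφ₀, hmax⟩ := isCompact_Icc.exists_isMaxOn
    (Set.nonempty_Icc.2 (neg_le_self (div_nonneg ha0.le (by linarith)))) harc
  have hkey := one_le_mul_pow_of_forall_arc_le hn hδ0 hδ1 (.mk_ball hgd hgc) hgδ hbound
    fun ψ hψ => hmax (abs_le.1 (hψ.trans hπn))
  exact ⟨arc φ₀, ⟨φ₀, abs_le.2 hφ₀, rfl⟩,
    rpow_le_of_one_le_mul_pow hδ0 hδ (one_le_mul_of_one_le_of_one_le hlam hM) hexp hkey⟩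
end

section
/- Let ν₁ ∈ (0, 3/4], θ ∈ (0, π), α = ν₁ e^{iθ/2} + 1 - ν₁, β = conj(α), and let z lie on the chord from β to α. Then (i) |(z-α)(z-β)| ≤ ν₁² sin²(θ/2), and (ii) 1 - |z| ≥ ν₁(1-ν₁)(1 - cos(θ/2)); consequently for any function with |g(z)| ≤ M·|(z-α)(z-β)|/(1-|z|) on the chord, |g(z)| ≤ 8Mν₁. -/
/-!
The chord `[β, α]` is the vertical segment joining `α = circleMap (1 - ν₁) ν₁ (θ / 2)` to its
conjugate. On any segment `[a, b]`, `‖(z - a)(z - b)‖ = t(1 - t)‖b - a‖² ≤ ‖b - a‖² / 4`, which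
gives (i) since `‖α - β‖ = 2ν₁ sin(θ/2)`. By convexity of the norm `‖z‖ ≤ ‖α‖`, and the law of
cosines gives `‖α‖² = 1 - 2d` with `d = ν₁(1 - ν₁)(1 - cos(θ/2))`, so `‖α‖ ≤ 1 - d`: this is (ii).
Finally `ν₁² sin²(θ/2) = ν₁²(1 - cos)(1 + cos) ≤ 8ν₁ d` because `1 - ν₁ ≥ 1/4`, so the numerator
in the bound on `g` is at most `8ν₁(1 - ‖z‖)`.
-/

open Complex ComplexConjugate

theorem norm_sub_mul_sub_le_of_mem_segment {R : Type*} [NormedRing R] [NormedAlgebra ℝ R]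
    {a b z : R} (hz : z ∈ segment ℝ a b) : ‖(z - a) * (z - b)‖ ≤ ‖b - a‖ ^ 2 / 4 := by
  obtain ⟨s, t, hs, ht, hst, rfl⟩ := hz
  obtain rfl : s = 1 - t := by linarith
  have hza : (1 - t) • a + t • b - a = t • (b - a) := by
    simp only [sub_smul, smul_sub, one_smul]; abel
  have hzb : (1 - t) • a + t • b - b = -((1 - t) • (b - a)) := by
    simp only [sub_smul, smul_sub, one_smul]; abel
  calc ‖((1 - t) • a + t • b - a) * ((1 - t) • a + t • b - b)‖
      ≤ ‖t • (b - a)‖ * ‖(1 - t) • (b - a)‖ := by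
        rw [hza, hzb, mul_neg, norm_neg]; exact norm_mul_le _ _
    _ = (1 - t) * t * ‖b - a‖ ^ 2 := by
        rw [norm_smul, norm_smul, Real.norm_of_nonneg hs, Real.norm_of_nonneg ht]; ring
    _ ≤ ‖b - a‖ ^ 2 / 4 := by nlinarith [sq_nonneg (1 - 2 * t), sq_nonneg ‖b - a‖]

theorem norm_le_of_mem_segment_conj {α z : ℂ} (hz : z ∈ segment ℝ (conj α) α) : ‖z‖ ≤ ‖α‖ := by
  have hα : α ∈ Metric.closedBall (0 : ℂ) ‖α‖ := by simp
  have hαc : conj α ∈ Metric.closedBall (0 : ℂ) ‖α‖ := by simp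
  simpa using (convex_closedBall (0 : ℂ) ‖α‖).segment_subset hαc hα hz

theorem norm_sq_circleMap_ofReal (a r φ : ℝ) :
    ‖circleMap a r φ‖ ^ 2 = a ^ 2 + 2 * a * r * Real.cos φ + r ^ 2 := by
  rw [← normSq_eq_norm_sq, circleMap, exp_mul_I, ← ofReal_cos, ← ofReal_sin, normSq_apply]
  simp only [add_re, add_im, ofReal_re, ofReal_im, mul_re, mul_im, I_re, I_im]
  linear_combination r ^ 2 * Real.sin_sq_add_cos_sq φ

theorem im_circleMap_ofReal (a r φ : ℝ) : (circleMap a r φ).im = r * Real.sin φ := by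
  simp [circleMap, exp_mul_I, ← ofReal_cos, ← ofReal_sin]

theorem mul_one_sub_mul_one_sub_cos_nonneg {ν : ℝ} (hν0 : 0 ≤ ν) (hν1 : ν ≤ 1) (φ : ℝ) :
    0 ≤ ν * (1 - ν) * (1 - Real.cos φ) :=
  mul_nonneg (mul_nonneg hν0 (sub_nonneg.2 hν1)) (sub_nonneg.2 (Real.cos_le_one φ))

theorem norm_circleMap_one_sub_le {ν : ℝ} (hν0 : 0 ≤ ν) (hν1 : ν ≤ 1) (φ : ℝ) :
    ‖circleMap (1 - ν : ℝ) ν φ‖ ≤ 1 - ν * (1 - ν) * (1 - Real.cos φ) := by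
  have hd0 := mul_one_sub_mul_one_sub_cos_nonneg hν0 hν1 φ
  have hd1 : ν * (1 - ν) * (1 - Real.cos φ) ≤ 1 := by
    nlinarith [Real.neg_one_le_cos φ, sq_nonneg (ν - 1 / 2), mul_nonneg hν0 (sub_nonneg.2 hν1)]
  rw [← pow_le_pow_iff_left₀ (norm_nonneg _) (by linarith) two_ne_zero,
    norm_sq_circleMap_ofReal]
  nlinarith

theorem sq_mul_sin_sq_le_of_le_three_quarters {ν : ℝ} (hν : ν ≤ 3 / 4) (φ : ℝ) :
    ν ^ 2 * Real.sin φ ^ 2 ≤ 8 * ν * (ν * (1 - ν) * (1 - Real.cos φ)) := by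
  have := mul_nonneg (mul_nonneg (sq_nonneg ν) (sub_nonneg.2 (Real.cos_le_one φ)))
    (by linarith [Real.cos_le_one φ] : 0 ≤ 8 * (1 - ν) - (1 + Real.cos φ))
  rw [Real.sin_sq]
  nlinarith

theorem stmt16_general (ν₁ θ : ℝ) (hν0 : 0 < ν₁) (hν : ν₁ ≤ 3 / 4)
    (α β : ℂ) (hα : α = ν₁ * Complex.exp ((θ / 2) * Complex.I) + (1 - ν₁ : ℝ))
    (hβ : β = starRingEnd ℂ α)
    (z : ℂ) (hz : z ∈ segment ℝ β α) :
    ‖(z - α) * (z - β)‖ ≤ ν₁ ^ 2 * Real.sin (θ / 2) ^ 2 ∧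
    ν₁ * (1 - ν₁) * (1 - Real.cos (θ / 2)) ≤ 1 - ‖z‖ ∧
    ∀ (M : ℝ) (g : ℂ → ℂ), 1 ≤ M →
      (∀ w ∈ segment ℝ β α,
        ‖g w‖ ≤ M * ‖(w - α) * (w - β)‖ / (1 - ‖w‖)) →
      ‖g z‖ ≤ 8 * M * ν₁ := by
  replace hα : α = circleMap (1 - ν₁ : ℝ) ν₁ (θ / 2) := by
    rw [hα, circleMap]; push_cast; ring
  subst hβ
  have hchord : ‖α - conj α‖ ^ 2 / 4 = ν₁ ^ 2 * Real.sin (θ / 2) ^ 2 := by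
    rw [sub_conj, hα, im_circleMap_ofReal, norm_mul, norm_real, norm_I, Real.norm_eq_abs,
      mul_one, sq_abs]
    ring
  have hprod : ‖(z - α) * (z - conj α)‖ ≤ ν₁ ^ 2 * Real.sin (θ / 2) ^ 2 := by
    rw [mul_comm, ← hchord]; exact norm_sub_mul_sub_le_of_mem_segment hz
  have hgap : ν₁ * (1 - ν₁) * (1 - Real.cos (θ / 2)) ≤ 1 - ‖z‖ := by
    have := (norm_le_of_mem_segment_conj hz).trans
      (hα ▸ norm_circleMap_one_sub_le hν0.le (by linarith) (θ / 2))
    linarith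
  refine ⟨hprod, hgap, fun M g hM hg => ?_⟩
  have hnum : ‖(z - α) * (z - conj α)‖ ≤ 8 * ν₁ * (1 - ‖z‖) :=
    hprod.trans <| (sq_mul_sin_sq_le_of_le_three_quarters hν (θ / 2)).trans <|
      mul_le_mul_of_nonneg_left hgap (by positivity)
  have hden : 0 ≤ 1 - ‖z‖ :=
    (mul_one_sub_mul_one_sub_cos_nonneg hν0.le (by linarith) (θ / 2)).trans hgap
  calc ‖g z‖ ≤ M * ‖(z - α) * (z - conj α)‖ / (1 - ‖z‖) := hg z hz
    _ ≤ 8 * M * ν₁ := div_le_of_le_mul₀ hden (by positivity) <|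
      (mul_le_mul_of_nonneg_left hnum (by linarith)).trans_eq (by ring)

/-- Chord estimate, low-retention case `ν₁ ≤ 3/4`: bounds on `|(z-α)(z-β)|` and `1 - |z|`
for `z` on the chord from `β` to `α` of the circle of radius `ν₁` centered at `1 - ν₁`,
and the resulting bound `8Mν₁` for functions dominated by `M|(z-α)(z-β)|/(1-|z|)`. -/
theorem stmt16 (ν₁ θ : ℝ) (hν0 : 0 < ν₁) (hν : ν₁ ≤ 3 / 4)
    (hθ0 : 0 < θ) (hθ : θ < Real.pi)
    (α β : ℂ) (hα : α = ν₁ * Complex.exp ((θ / 2) * Complex.I) + (1 - ν₁ : ℝ))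
    (hβ : β = starRingEnd ℂ α)
    (z : ℂ) (hz : z ∈ segment ℝ β α) :
    ‖(z - α) * (z - β)‖ ≤ ν₁ ^ 2 * Real.sin (θ / 2) ^ 2 ∧
    ν₁ * (1 - ν₁) * (1 - Real.cos (θ / 2)) ≤ 1 - ‖z‖ ∧
    ∀ (M : ℝ) (g : ℂ → ℂ), 1 ≤ M →
      (∀ w ∈ segment ℝ β α,
        ‖g w‖ ≤ M * ‖(w - α) * (w - β)‖ / (1 - ‖w‖)) →
      ‖g z‖ ≤ 8 * M * ν₁ :=
  stmt16_general ν₁ θ hν0 hν α β hα hβ z hz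
end

section
/- Let θ ∈ (0,π), ν₁ ∈ (3/4, 1], α = ν₁ e^{iθ/2} + 1 - ν₁, β = conj(α). For every point z on the chord from β to α at distance τ ∈ [0, ν₁ sin(θ/2)] from α, one has 1 - |z| ≥ τ·sin(θ/2)/4 and |(z-α)(z-β)| ≤ 2τ; hence any g with |g(z)| ≤ M·|(z-α)(z-β)|/(1-|z|) satisfies |g(z)| ≤ 8M/sin(θ/2) on the chord. -/
/-!
Write `s = sin (θ/2)`. As a convex combination of `e^{iθ/2}` and `1`, `α` lies in the closed
unit disc, and `Im α = ν₁ s`. The chord from `β = conj α` to `α` is vertical, so for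
`z = α - τ i` with `0 ≤ τ ≤ Im α` we get `‖z‖² = ‖α‖² - 2τ Im α + τ² ≤ 1 - τ Im α`, and
`1 - ‖z‖ ≥ (1 - ‖z‖²)/2 ≥ τ ν₁ s / 2 ≥ τ s / 4`. Also `z - α = -τ i` and
`z - β = (2 Im α - τ) i`, so `‖(z - α)(z - β)‖ ≤ 2τ Im α ≤ 2τ`. The quotient of the two
bounds is at most `8/s`.
-/

open ComplexConjugate

lemma div_two_le_one_sub_of_sq_le {r t : ℝ} (hr : 0 ≤ r) (ht : 0 ≤ t) (h : r ^ 2 ≤ 1 - t) :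
    t / 2 ≤ 1 - r := by
  nlinarith

lemma mul_div_le_eight_mul_div {M P D τ s : ℝ} (hM : 0 ≤ M) (hs : 0 < s) (hP0 : 0 ≤ P)
    (hP : P ≤ 2 * τ) (hD : τ * s / 4 ≤ D) : M * P / D ≤ 8 * M / s := by
  rcases le_or_gt D 0 with hD0 | hD0
  · exact (div_nonpos_of_nonneg_of_nonpos (by positivity) hD0).trans (by positivity)
  · rw [div_le_div_iff₀ hD0 hs]
    nlinarith [mul_le_mul_of_nonneg_left hP hM]

namespace Complex

lemma sq_norm_sub_ofReal_mul_I (α : ℂ) (τ : ℝ) :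
    ‖α - τ * I‖ ^ 2 = ‖α‖ ^ 2 - 2 * τ * α.im + τ ^ 2 := by
  simp only [Complex.sq_norm, normSq_apply, sub_re, sub_im, mul_re, mul_im, ofReal_re, ofReal_im,
    I_re, I_im]
  ring

lemma sub_ofReal_mul_I_sub_conj (α : ℂ) (τ : ℝ) :
    α - τ * I - conj α = ((2 * α.im - τ : ℝ) : ℂ) * I := by
  apply Complex.ext <;> simp; ring

lemma sub_ofReal_mul_I_mem_segment_conj {α : ℂ} {τ : ℝ} (hτ0 : 0 ≤ τ) (hτ : τ ≤ 2 * α.im) :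
    α - τ * I ∈ segment ℝ (conj α) α := by
  rcases hτ0.eq_or_lt with rfl | hτpos
  · simpa using right_mem_segment ℝ (conj α) α
  have him : 0 < 2 * α.im := hτpos.trans_le hτ
  have hne : α.im ≠ 0 := (by linarith : 0 < α.im).ne'
  refine ⟨τ / (2 * α.im), 1 - τ / (2 * α.im), by positivity,
    by rw [sub_nonneg, div_le_one him]; exact hτ, by ring, ?_⟩
  apply Complex.ext <;>
    simp only [add_re, add_im, smul_re, smul_im, conj_re, conj_im, sub_re, sub_im, mul_re,
      mul_im, ofReal_re, ofReal_im, I_re, I_im, smul_eq_mul] <;>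
    field_simp <;> ring

lemma mul_im_div_two_le_one_sub_norm {α : ℂ} {τ : ℝ} (hα : ‖α‖ ≤ 1) (hτ0 : 0 ≤ τ)
    (hτ : τ ≤ α.im) : τ * α.im / 2 ≤ 1 - ‖α - τ * I‖ := by
  refine div_two_le_one_sub_of_sq_le (norm_nonneg _) (by nlinarith) ?_
  rw [sq_norm_sub_ofReal_mul_I]
  nlinarith [norm_nonneg α]

lemma norm_sub_mul_sub_conj_le_two_mul {α : ℂ} {τ : ℝ} (hα : ‖α‖ ≤ 1) (hτ0 : 0 ≤ τ) (hτ : τ ≤ 2 * α.im) :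
    ‖(α - τ * I - α) * (α - τ * I - conj α)‖ ≤ 2 * τ := by
  have him : α.im ≤ 1 := (im_le_norm α).trans hα
  rw [sub_ofReal_mul_I_sub_conj, sub_sub_cancel_left, norm_mul, norm_neg, norm_mul, norm_mul,
    norm_I, norm_real, norm_real, Real.norm_of_nonneg hτ0, Real.norm_of_nonneg (by linarith)]
  nlinarith

lemma norm_ofReal_mul_exp_add_ofReal_le_one {ν : ℝ} (h0 : 0 ≤ ν) (h1 : ν ≤ 1) (φ : ℝ) :
    ‖ν * exp (φ * I) + (1 - ν : ℝ)‖ ≤ 1 := by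
  refine (norm_add_le _ _).trans_eq ?_
  rw [norm_mul, norm_exp_ofReal_mul_I, norm_real, norm_real, Real.norm_of_nonneg h0,
    Real.norm_of_nonneg (by linarith)]
  ring

end Complex

/-- Chord estimate, high-retention case `ν₁ > 3/4`: for the point `z` of the chord from
`β` to `α` at distance `τ ∈ [0, ν₁ sin(θ/2)]` from `α`, bounds on `1 - |z|` and
`|(z-α)(z-β)|`, and the resulting bound `8M/sin(θ/2)` for functions dominated by
`M|(w-α)(w-β)|/(1-|w|)` on the chord. -/
theorem stmt17 (ν₁ θ τ : ℝ) (hν0 : 3 / 4 < ν₁) (hν : ν₁ ≤ 1)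
    (hθ0 : 0 < θ) (hθ : θ < Real.pi)
    (hτ0 : 0 ≤ τ) (hτ : τ ≤ ν₁ * Real.sin (θ / 2))
    (α β : ℂ) (hα : α = ν₁ * Complex.exp ((θ / 2) * Complex.I) + (1 - ν₁ : ℝ))
    (hβ : β = starRingEnd ℂ α)
    (z : ℂ) (hz : z = α - τ * Complex.I) :
    τ * Real.sin (θ / 2) / 4 ≤ 1 - ‖z‖ ∧
    ‖(z - α) * (z - β)‖ ≤ 2 * τ ∧
    ∀ (M : ℝ) (g : ℂ → ℂ), 1 ≤ M →
      (∀ w ∈ segment ℝ β α,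
        ‖g w‖ ≤ M * ‖(w - α) * (w - β)‖ / (1 - ‖w‖)) →
      ‖g z‖ ≤ 8 * M / Real.sin (θ / 2) := by
  set s := Real.sin (θ / 2)
  have hs : 0 < s := Real.sin_pos_of_pos_of_lt_pi (by linarith) (by linarith)
  rw [show (θ : ℂ) / 2 = ((θ / 2 : ℝ) : ℂ) by push_cast; ring] at hα
  have hα_im : α.im = ν₁ * s := by
    simp only [hα, Complex.add_im, Complex.mul_im, Complex.ofReal_re, Complex.ofReal_im,
      Complex.exp_ofReal_mul_I_re, Complex.exp_ofReal_mul_I_im]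
    ring
  have hα_norm : ‖α‖ ≤ 1 :=
    hα ▸ Complex.norm_ofReal_mul_exp_add_ofReal_le_one (by linarith) hν _
  subst hβ hz
  have hdist := Complex.mul_im_div_two_le_one_sub_norm hα_norm hτ0 (hα_im ▸ hτ)
  have hprod := Complex.norm_sub_mul_sub_conj_le_two_mul hα_norm hτ0 (by nlinarith)
  have hdist' : τ * s / 4 ≤ 1 - ‖α - τ * Complex.I‖ := by
    rw [hα_im] at hdist
    nlinarith [mul_nonneg hτ0 hs.le]
  refine ⟨hdist', hprod, fun M g hM hg => ?_⟩
  refine (hg _ (Complex.sub_ofReal_mul_I_mem_segment_conj hτ0 (by nlinarith))).trans ?_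
  exact mul_div_le_eight_mul_div (by linarith) hs (norm_nonneg _) hprod hdist'
end
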